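/- arXiv:2107.02333 — 3 statements merged into one kernel-verified Lean document; each statement's English description precedes it below -/
import Mathlib

section
/- Let V be a type, π^i, π^e : V → V → Prop and π^t : V → V → V → Prop satisfying conditions (c1), (c2), (c3) as above, and additionally ∀ u v, ¬(π^i(u,v) ∧ π^e(u,v)). Let F : V → V → Prop. Then there exists E : V → V → Prop with (∀ u v, π^i(u,v) → E(u,v)), (∀ u v, π^e(u,v) → ¬E(u,v)), (∀ u v w, π^t(u,w,v) ∧ E(u,v) → E(u,w)), and (∀ x y, F(x,y) ↔ E(x,y) ∧ E(y,x)), if and only if F satisfies: (F₁) ∀ x y, F(x,y) → F(y,x); (F₂) ∀ x y, F(y,x) → ¬π^e(x,y); (F₃) ∀ x y, F(x,y) → ¬π^e(x,y); (F₄) ∀ x y, π^i(x,y) ∧ π^i(y,x) → F(y,x); (F₅) ∀ x y z, π^i(x,y) ∧ π^t(y,x,z) ∧ F(y,z) → F(x,y); (F₆) ∀ x y z u, π^t(x,y,z) ∧ F(x,z) ∧ π^t(y,x,u) ∧ F(y,u) → F(y,x). -/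
/-- Axiomatization of the symmetric-subgraph class `C⁻` obtained by eliminating `E`. -/
theorem stmt_8 {V : Type*} (πi πe : V → V → Prop) (πt : V → V → V → Prop)
    (c1 : ∀ u v w, πi u v ∧ πt u w v → πi u w)
    (c2 : ∀ u v w, πe u w ∧ πt u w v → πe u v)
    (c3 : ∀ u v w x, πt u w v ∧ πt u x w → πt u x v)
    (hcons : ∀ u v, ¬ (πi u v ∧ πe u v))
    (F : V → V → Prop) :
    (∃ E : V → V → Prop,
        (∀ u v, πi u v → E u v) ∧
        (∀ u v, πe u v → ¬ E u v) ∧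
        (∀ u v w, πt u w v ∧ E u v → E u w) ∧
        (∀ x y, F x y ↔ E x y ∧ E y x)) ↔
    ((∀ x y, F x y → F y x) ∧
     (∀ x y, F y x → ¬ πe x y) ∧
     (∀ x y, F x y → ¬ πe x y) ∧
     (∀ x y, πi x y ∧ πi y x → F y x) ∧
     (∀ x y z, πi x y ∧ πt y x z ∧ F y z → F x y) ∧
     (∀ x y z u, πt x y z ∧ F x z ∧ πt y x u ∧ F y u → F y x)) := by
  constructor
  · rintro ⟨E, hEi, hEe, hEt, hEF⟩
    refine ⟨?_, ?_, ?_, ?_, ?_, ?_⟩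
    · intro x y h
      exact (hEF y x).2 ⟨((hEF x y).1 h).2, ((hEF x y).1 h).1⟩
    · intro x y h
      exact fun he => hEe x y he ((hEF y x).1 h).2
    · intro x y h
      exact fun he => hEe x y he ((hEF x y).1 h).1
    · rintro x y ⟨h1, h2⟩
      exact (hEF y x).2 ⟨hEi y x h2, hEi x y h1⟩
    · rintro x y z ⟨h1, h2, h3⟩
      exact (hEF x y).2 ⟨hEi x y h1, hEt y z x ⟨h2, ((hEF y z).1 h3).1⟩⟩
    · rintro x y z u ⟨h1, h2, h3, h4⟩
      exact (hEF y x).2 ⟨hEt y u x ⟨h3, ((hEF y u).1 h4).1⟩,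
        hEt x z y ⟨h1, ((hEF x z).1 h2).1⟩⟩
  · rintro ⟨F1, F2, F3, F4, F5, F6⟩
    refine ⟨fun u v => πi u v ∨ F u v ∨ ∃ w, πt u v w ∧ F u w, ?_, ?_, ?_, ?_⟩
    · intro u v h; exact Or.inl h
    · rintro u v he (h | h | ⟨w, hw, hFw⟩)
      · exact hcons u v ⟨h, he⟩
      · exact F3 u v h he
      · exact F3 u w hFw (c2 u w v ⟨he, hw⟩)
    · rintro u v w ⟨ht, (h | h | ⟨x, hx, hFx⟩)⟩
      · exact Or.inl (c1 u v w ⟨h, ht⟩)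
      · exact Or.inr (Or.inr ⟨v, ht, h⟩)
      · exact Or.inr (Or.inr ⟨x, c3 u x v w ⟨hx, ht⟩, hFx⟩)
    · intro x y
      constructor
      · intro h
        exact ⟨Or.inr (Or.inl h), Or.inr (Or.inl (F1 x y h))⟩
      · rintro ⟨(h1 | h1 | ⟨z, hz, hFz⟩), (h2 | h2 | ⟨u, hu, hFu⟩)⟩
        · exact F1 y x (F4 x y ⟨h1, h2⟩)
        · exact F1 y x h2
        · exact F5 x y u ⟨h1, hu, hFu⟩
        · exact h1
        · exact h1
        · exact h1
        · exact F1 y x (F5 y x z ⟨h2, hz, hFz⟩)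
        · exact F1 y x h2
        · exact F1 y x (F6 x y z u ⟨hz, hFz, hu, hFu⟩)
end

section
/- Let n : ℤ → ℤ → Prop be an arbitrary relation. There exists a relation P : ℤ → ℤ → Prop satisfying (1) ∀ x, P(x,x), (2) ∀ x z, P(x+1, z) → P(x,z), and (3) ∀ x y, n(x,y) → ¬P(x,y), if and only if ∀ u y k, (k ≥ 0 ∧ y = u + k) → ¬n(u,y). -/
/-- Second-order quantifier elimination by acceleration over the integers. -/
theorem stmt_9 (n : ℤ → ℤ → Prop) :
    (∃ P : ℤ → ℤ → Prop,
        (∀ x, P x x) ∧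
        (∀ x z, P (x + 1) z → P x z) ∧
        (∀ x y, n x y → ¬ P x y)) ↔
    (∀ u y k : ℤ, (k ≥ 0 ∧ y = u + k) → ¬ n u y) := by
  constructor
  · rintro ⟨P, hrefl, hstep, hn⟩ u y k ⟨hk, hy⟩ hnuy
    apply hn u y hnuy
    subst hy
    have key : ∀ m : ℤ, 0 ≤ m → ∀ u : ℤ, P u (u + m) :=
      Int.le_induction (by simpa using hrefl)
        (fun m _ ih u => hstep _ _ (by
          have h2 : u + (m + 1) = u + 1 + m := by ring
          rw [h2]
          exact ih (u + 1)))
    exact key k hk u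
  · intro h
    refine ⟨fun x y => x ≤ y, fun x => le_refl x, fun x z hz => by linarith, ?_⟩
    intro x y hn hxy
    exact h x y (y - x) ⟨by linarith, by ring⟩ hn
end

section
/- Let M be an n × n integer matrix such that the multiplicative monoid ⟨M⟩ = { M^k | k ∈ ℕ } is finite. Then there exist natural numbers p ≥ 1 and q ≥ 0 with M^{q+p} = M^q; consequently, for every vector v ∈ ℤⁿ, the reachability set { M^k x + (M^{k-1} + ⋯ + M + I) v | k ∈ ℕ } from any x ∈ ℤⁿ under the affine map y = M x + v is a finite union of sets of the form { a + k·b | k ∈ ℕ } for vectors a, b ∈ ℤⁿ. -/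
/-!
Finitely many powers force a repetition `M ^ (q + p) = M ^ q` with `p ≥ 1`. From step `q` on,
the orbit `f k = M ^ k x + (∑ i < k, M ^ i) v` then satisfies
`f (k + p) = f k + M ^ k (∑ i < p, M ^ i) v`, and this increment is itself `p`-periodic in `k`.
So each residue class `q + r + p ℕ` is mapped onto an arithmetic progression, and the first `q`
points are degenerate progressions.
-/

open Finset Matrix

lemma Monoid.exists_pow_add_eq_pow_of_finite_range {G : Type*} [Monoid G] {a : G}
    (h : (Set.range fun k : ℕ => a ^ k).Finite) :
    ∃ p q : ℕ, 1 ≤ p ∧ a ^ (q + p) = a ^ q := by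
  obtain ⟨q, m, hqm, hpow⟩ :=
    h.exists_lt_map_eq_of_forall_mem (f := fun k : ℕ => a ^ k) (Set.mem_range_self)
  exact ⟨m - q, q, by omega, by rw [Nat.add_sub_cancel' hqm.le]; exact hpow.symm⟩

lemma pow_add_eq_pow_of_le {G : Type*} [Monoid G] {a : G} {p q : ℕ}
    (h : a ^ (q + p) = a ^ q) {k : ℕ} (hk : q ≤ k) : a ^ (k + p) = a ^ k := by
  obtain ⟨m, rfl⟩ := Nat.exists_eq_add_of_le hk
  rw [add_right_comm, pow_add, h, ← pow_add]

lemma apply_add_mul_of_periodic_from {α : Type*} {d : ℕ → α} {p q : ℕ}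
    (hd : ∀ k, q ≤ k → d (k + p) = d k) {k : ℕ} (hk : q ≤ k) (j : ℕ) :
    d (k + j * p) = d k := by
  induction j with
  | zero => simp
  | succ j ih => rw [add_one_mul, ← add_assoc, hd _ (by omega), ih]

lemma apply_add_mul_eq_add_nsmul_of_periodic_increment {A : Type*} [AddCommMonoid A]
    {f d : ℕ → A} {p q : ℕ} (hf : ∀ k, q ≤ k → f (k + p) = f k + d k)
    (hd : ∀ k, q ≤ k → d (k + p) = d k) {k : ℕ} (hk : q ≤ k) (j : ℕ) :
    f (k + j * p) = f k + j • d k := by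
  induction j with
  | zero => simp
  | succ j ih =>
    rw [add_one_mul, ← add_assoc, hf _ (by omega), ih, apply_add_mul_of_periodic_from hd hk,
      succ_nsmul, add_assoc]

lemma exists_range_eq_biUnion_progressions {A : Type*} [AddCommMonoid A]
    {f d : ℕ → A} {p q : ℕ} (hp : 1 ≤ p) (hf : ∀ k, q ≤ k → f (k + p) = f k + d k)
    (hd : ∀ k, q ≤ k → d (k + p) = d k) :
    ∃ s : Finset (A × A), Set.range f = ⋃ ab ∈ s, {y | ∃ j : ℕ, y = ab.1 + j • ab.2} := by
  classical
  refine ⟨(range q).image (fun k => (f k, 0)) ∪ (range p).image (fun r => (f (q + r), d (q + r))),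
    ?_⟩
  ext y
  simp only [Set.mem_range, Set.mem_iUnion, Set.mem_ofPred_eq, mem_union, mem_image, mem_range,
    exists_prop]
  constructor
  · rintro ⟨k, rfl⟩
    rcases lt_or_ge k q with hk | hk
    · exact ⟨(f k, 0), Or.inl ⟨k, hk, rfl⟩, 0, by simp⟩
    · have hdecomp : k = q + (k - q) % p + (k - q) / p * p := by
        have := Nat.mod_add_div (k - q) p
        rw [mul_comm] at this
        omega
      refine ⟨_, Or.inr ⟨(k - q) % p, Nat.mod_lt _ (by omega), rfl⟩, (k - q) / p, ?_⟩
      conv_lhs => rw [hdecomp]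
      exact apply_add_mul_eq_add_nsmul_of_periodic_increment hf hd (by omega) _
  · rintro ⟨ab, ⟨k, -, rfl⟩ | ⟨r, -, rfl⟩, j, rfl⟩
    · exact ⟨k, by simp⟩
    · exact ⟨q + r + j * p,
        apply_add_mul_eq_add_nsmul_of_periodic_increment hf hd (by omega) j⟩

section AffineOrbit

variable {ι R : Type*} [Fintype ι] [DecidableEq ι] [CommRing R]

lemma sum_range_pow_add (M : Matrix ι ι R) (k p : ℕ) :
    ∑ i ∈ range (k + p), M ^ i = ∑ i ∈ range k, M ^ i + M ^ k * ∑ i ∈ range p, M ^ i := by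
  rw [sum_range_add, mul_sum]
  simp only [pow_add]

lemma affine_orbit_add_of_pow_add_eq {M : Matrix ι ι R} {k p : ℕ} (hM : M ^ (k + p) = M ^ k)
    (x v : ι → R) :
    M ^ (k + p) *ᵥ x + (∑ i ∈ range (k + p), M ^ i) *ᵥ v =
      (M ^ k *ᵥ x + (∑ i ∈ range k, M ^ i) *ᵥ v) +
        M ^ k *ᵥ (∑ i ∈ range p, M ^ i) *ᵥ v := by
  rw [hM, sum_range_pow_add, add_mulVec, mulVec_mulVec]
  abel

lemma exists_affine_orbit_eq_biUnion_progressions {M : Matrix ι ι R} {p q : ℕ} (hp : 1 ≤ p)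
    (hM : M ^ (q + p) = M ^ q) (x v : ι → R) :
    ∃ s : Finset ((ι → R) × (ι → R)),
      Set.range (fun k : ℕ => M ^ k *ᵥ x + (∑ i ∈ range k, M ^ i) *ᵥ v) =
        ⋃ ab ∈ s, {y | ∃ j : ℕ, y = ab.1 + j • ab.2} :=
  exists_range_eq_biUnion_progressions (d := fun k => M ^ k *ᵥ (∑ i ∈ range p, M ^ i) *ᵥ v) hp
    (fun _ hk => affine_orbit_add_of_pow_add_eq (pow_add_eq_pow_of_le hM hk) x v)
    (fun _ hk => by simp only [pow_add_eq_pow_of_le hM hk])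

end AffineOrbit

/-- If the monoid of powers of an integer matrix `M` is finite, then the powers of `M`
are eventually periodic, and the reachability set of any affine map `y = M x + v`
is a finite union of arithmetic progressions. -/
theorem stmt_17 {n : ℕ} (M : Matrix (Fin n) (Fin n) ℤ)
    (hfin : (Set.range fun k : ℕ => M ^ k).Finite) :
    (∃ p : ℕ, 1 ≤ p ∧ ∃ q : ℕ, M ^ (q + p) = M ^ q) ∧
    ∀ v x : Fin n → ℤ,
      ∃ s : Finset ((Fin n → ℤ) × (Fin n → ℤ)),
        {y : Fin n → ℤ | ∃ k : ℕ,
            y = (M ^ k).mulVec x + (∑ i ∈ Finset.range k, M ^ i).mulVec v} =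
        ⋃ ab ∈ s, {y : Fin n → ℤ | ∃ k : ℕ, y = ab.1 + (k : ℤ) • ab.2} := by
  obtain ⟨p, q, hp, hM⟩ := Monoid.exists_pow_add_eq_pow_of_finite_range hfin
  refine ⟨⟨p, hp, q, hM⟩, fun v x => ?_⟩
  obtain ⟨s, hs⟩ := exists_affine_orbit_eq_biUnion_progressions hp hM x v
  refine ⟨s, ?_⟩
  simp only [natCast_zsmul, ← hs, Set.range, eq_comm]
end
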